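/- For every integer d ≥ 2 and every real q ≠ 0 there exists Λ₀ = Λ₀(q,d) > 0 with the following property. Let (X,Y,Z,W) be a solution of (★) on (−∞, t_max) such that: (i) Y(t) > 0 and W(t) > 0 for all t; (ii) (X,Y,Z,W)(t) → (0,0,1,0) as t → −∞; (iii) the first integral equation holds with a constant 𝓒 > 0, where 𝓛 = g·Y and g(t) = λ·exp(∫_{−∞}^{t} X(τ)dτ) with λ > 0; (iv) lim_{t→−∞} W(t)/Y(t)² = 1; and (v) 𝓒λ² ≥ Λ₀. Then W(t)²/Y(t)² ≤ A₂/(A₃(d+2)) for all t ∈ (−∞, t_max). -/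

import Mathlib

open Filter Topology MeasureTheory

/-- `A₂ = d(d+2)`. -/
noncomputable def A2 (d : ℕ) : ℝ := (d : ℝ) * ((d : ℝ) + 2)

/-- `A₃ = (1/4)·d·(d+2)²·q²`. -/
noncomputable def A3 (d : ℕ) (q : ℝ) : ℝ := (1/4) * (d : ℝ) * ((d : ℝ) + 2)^2 * q^2

/-- `(X,Y,Z,W)` solves the nonlinear system (★) on the set `s`. -/
def StarSystem (d : ℕ) (q : ℝ) (X Y Z W : ℝ → ℝ) (s : Set ℝ) : Prop :=
  ∀ t ∈ s,
    HasDerivAt X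
      (X t * ((d : ℝ) * X t^2 + Z t^2 - 1) + (A2 d / (d : ℝ)) * Y t^2
        - (2 * A3 d q / (d : ℝ)) * W t^2) t ∧
    HasDerivAt Y (Y t * ((d : ℝ) * X t^2 + Z t^2 - X t)) t ∧
    HasDerivAt Z (Z t * ((d : ℝ) * X t^2 + Z t^2 - 1) + A3 d q * W t^2) t ∧
    HasDerivAt W (W t * ((d : ℝ) * X t^2 + Z t^2 - 2*X t + Z t)) t

/-!
Suppose `E = (d+2)A₃W² - A₂Y²` becomes nonnegative. Since `W ~ Y²` at `-∞`, `E < 0` there,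
so there is a first time `t₀` with `E(t₀) = 0`. On `(-∞, t₀]` the defect
`P = 1 - (dX² + A₂Y² + Z² - A₃W²) = 𝓒𝓛²` is positive, increasing (`P' = 2(dX² + Z²)P`) and
dominates the other terms: Grönwall comparisons started at `-∞` give `X ≥ 0`, hence `g ≥ λ`
and `A₂Y² ≤ P/100` once `𝓒λ² ≥ 100A₂`, and then `X ≤ P/(100d)`. Also `Z - X ≥ 0`, because
`E'(t₀) = 2A₂Y²(Z - X)(t₀) ≥ 0` and `(Z - X)' ≤ (dX² + Z² - 1)(Z - X)`.

The function `log (W/Y²) - ∫X`, which tends to `0` at `-∞`, has derivative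
`Z - (dX² + Z²) - X`. While `Z ≥ 1/2` this is at most `-(21/10)Z'`; once `Z` has dropped to
`1/2` the defect is at least `7/10`, so it is at most `-(10/7)(Z - X)'`. Hence the function is
at most `2` at `t₀`. At `t₀`, however, `W² = A₂Y²/(A₃(d+2))` and `𝓒λ²e^{2∫X}Y² = P ≤ 1`
bound it below by `½ log (A₂𝓒λ²/(A₃(d+2)))`, which exceeds `2` when `𝓒λ²` is large.
-/

open Set Real

theorem antitoneOn_of_hasDerivAt_nonpos {D : Set ℝ} (hD : Convex ℝ D) {f f' : ℝ → ℝ}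
    (hf : ∀ x ∈ D, HasDerivAt f (f' x) x) (hf' : ∀ x ∈ D, f' x ≤ 0) : AntitoneOn f D :=
  antitoneOn_of_hasDerivWithinAt_nonpos hD (fun x hx => (hf x hx).continuousAt.continuousWithinAt)
    (fun x hx => (hf x (interior_subset hx)).hasDerivWithinAt)
    fun x hx => hf' x (interior_subset hx)

theorem monotoneOn_of_hasDerivAt_nonneg {D : Set ℝ} (hD : Convex ℝ D) {f f' : ℝ → ℝ}
    (hf : ∀ x ∈ D, HasDerivAt f (f' x) x) (hf' : ∀ x ∈ D, 0 ≤ f' x) : MonotoneOn f D :=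
  monotoneOn_of_hasDerivWithinAt_nonneg hD (fun x hx => (hf x hx).continuousAt.continuousWithinAt)
    (fun x hx => (hf x (interior_subset hx)).hasDerivWithinAt)
    fun x hx => hf' x (interior_subset hx)

theorem HasDerivAt.nonneg_of_isMaxOn_Iic {g : ℝ → ℝ} {g' x : ℝ} (hg : HasDerivAt g g' x)
    (hmax : IsMaxOn g (Iic x) x) : 0 ≤ g' := by
  have hseg : segment ℝ x (x + -1) ⊆ Iic x := by
    rw [segment_symm, segment_eq_Icc (by linarith)]
    exact Icc_subset_Iic_self
  simpa using hmax.localize.hasFDerivWithinAt_nonpos hg.hasFDerivAt.hasFDerivWithinAt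
    (mem_posTangentConeAt_of_segment_subset hseg)

theorem exists_first_hitting {g : ℝ → ℝ} {a b c : ℝ} (hab : a ≤ b)
    (hg : ContinuousOn g (Icc a b)) (ha : g a < c) (hb : c ≤ g b) :
    ∃ x ∈ Ioc a b, g x = c ∧ ∀ y ∈ Ico a x, g y < c := by
  set S := {x ∈ Icc a b | c ≤ g x}
  have hS : S.Nonempty := ⟨b, right_mem_Icc.2 hab, hb⟩
  have hSbdd : BddBelow S := ⟨a, fun x hx => hx.1.1⟩
  obtain ⟨⟨hax, hxb⟩, hcx⟩ : sInf S ∈ S :=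
    (hg.preimage_isClosed_of_isClosed isClosed_Icc isClosed_Ici).csInf_mem hS hSbdd
  have hbefore : ∀ y ∈ Ico a (sInf S), g y < c := fun y hy =>
    not_le.1 fun hcy => (csInf_le hSbdd ⟨⟨hy.1, hy.2.le.trans hxb⟩, hcy⟩).not_gt hy.2
  obtain ⟨y, hy, hgy⟩ :=
    intermediate_value_Icc hax (hg.mono (Icc_subset_Icc_right hxb)) ⟨ha.le, hcx⟩
  have hyx : y = sInf S := le_antisymm hy.2 (csInf_le hSbdd ⟨⟨hy.1, hy.2.trans hxb⟩, hgy.ge⟩)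
  exact ⟨sInf S, ⟨lt_of_le_of_ne hax fun h => ha.not_ge (h ▸ hcx), hxb⟩, hyx ▸ hgy, hbefore⟩

theorem hasDerivAt_integral_Iic {f : ℝ → ℝ} {b x : ℝ} (hf : IntegrableOn f (Iic b))
    (hx : x < b) (hc : ContinuousAt f x) :
    HasDerivAt (fun t => ∫ s in Iic t, f s) (f x) x := by
  have hloc : (fun t => ∫ s in Iic t, f s) =ᶠ[𝓝 x]
      fun t => (∫ s in Iic x, f s) + ∫ s in x..t, f s := by
    filter_upwards [Iic_mem_nhds hx] with t ht
    rw [← intervalIntegral.integral_Iic_sub_Iic (hf.mono_set (Iic_subset_Iic.2 hx.le))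
      (hf.mono_set (Iic_subset_Iic.2 ht))]
    ring
  refine HasDerivAt.congr_of_eventuallyEq ?_ hloc
  exact (intervalIntegral.integral_hasDerivAt_right IntervalIntegrable.refl
    (AEStronglyMeasurable.stronglyMeasurableAtFilter_of_mem hf.aestronglyMeasurable
      (Iic_mem_nhds hx)) hc).const_add _

section Gronwall

variable {ψ ψ' b : ℝ → ℝ} {U : Set ℝ}

theorem le_mul_exp_integral_of_hasDerivAt_le (hU : IsOpen U) (hb : ContinuousOn b U) {s t : ℝ}
    (hst : s ≤ t) (hsub : Icc s t ⊆ U) (hψ : ∀ x ∈ Icc s t, HasDerivAt ψ (ψ' x) x)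
    (hle : ∀ x ∈ Icc s t, ψ' x ≤ b x * ψ x) :
    ψ t ≤ ψ s * exp (∫ x in s..t, b x) := by
  set B := fun u => ∫ x in s..u, b x
  have hB : ∀ x ∈ Icc s t, HasDerivAt B (b x) x := fun x hx =>
    intervalIntegral.integral_hasDerivAt_right
      (hb.mono (by rw [uIcc_of_le hx.1]; exact (Icc_subset_Icc_right hx.2).trans hsub)
        |>.intervalIntegrable)
      (hb.stronglyMeasurableAtFilter hU x (hsub hx)) (hb.continuousAt (hU.mem_nhds (hsub hx)))
  have hanti : AntitoneOn (fun u => ψ u * exp (-B u)) (Icc s t) :=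
    antitoneOn_of_hasDerivAt_nonpos (convex_Icc s t)
      (fun x hx => (hψ x hx).mul (hB x hx).neg.exp) fun x hx => by
        have := mul_le_mul_of_nonneg_right (hle x hx) (exp_pos (-B x)).le
        simp only [Pi.neg_apply]
        linarith
  have h := hanti (left_mem_Icc.2 hst) (right_mem_Icc.2 hst) hst
  simp only [B, intervalIntegral.integral_same, neg_zero, exp_zero, mul_one] at h
  calc ψ t = ψ t * exp (-B t) * exp (B t) := by
        rw [mul_assoc, ← exp_add, neg_add_cancel, exp_zero, mul_one]
    _ ≤ ψ s * exp (B t) := by gcongr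

theorem nonpos_of_hasDerivAt_le_mul_of_tendsto_atBot (hU : IsOpen U) (hb : ContinuousOn b U)
    {t₀ : ℝ} (hsub : Iic t₀ ⊆ U) (hb₀ : ∀ x ≤ t₀, b x ≤ 0)
    (hψ : ∀ x ≤ t₀, HasDerivAt ψ (ψ' x) x) (hle : ∀ x ≤ t₀, ψ' x ≤ b x * ψ x)
    (hlim : Tendsto ψ atBot (𝓝 0)) : ∀ t ≤ t₀, ψ t ≤ 0 := by
  intro t ht
  have key : ∀ s ≤ t, ψ t ≤ |ψ s| := fun s hs => by
    have hI : ∫ x in s..t, b x ≤ 0 := by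
      rw [intervalIntegral.integral_of_le hs]
      exact setIntegral_nonpos measurableSet_Ioc fun x hx => hb₀ x (hx.2.trans ht)
    calc ψ t ≤ ψ s * exp (∫ x in s..t, b x) :=
          le_mul_exp_integral_of_hasDerivAt_le hU hb hs
            ((Icc_subset_Iic_self.trans (Iic_subset_Iic.2 ht)).trans hsub)
            (fun x hx => hψ x (hx.2.trans ht)) fun x hx => hle x (hx.2.trans ht)
      _ ≤ |ψ s * exp (∫ x in s..t, b x)| := le_abs_self _
      _ ≤ |ψ s| := by
          rw [abs_mul, abs_of_pos (exp_pos _)]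
          exact mul_le_of_le_one_right (abs_nonneg _) (exp_le_one_iff.2 hI)
  simpa using ge_of_tendsto hlim.abs (eventually_atBot.2 ⟨t, key⟩)

theorem nonneg_of_hasDerivAt_le_mul_of_nonneg (hU : IsOpen U) (hb : ContinuousOn b U) {s t : ℝ}
    (hst : s ≤ t) (hsub : Icc s t ⊆ U) (hψ : ∀ x ∈ Icc s t, HasDerivAt ψ (ψ' x) x)
    (hle : ∀ x ∈ Icc s t, ψ' x ≤ b x * ψ x) (ht : 0 ≤ ψ t) : 0 ≤ ψ s := by
  by_contra! hs
  have := le_mul_exp_integral_of_hasDerivAt_le hU hb hst hsub hψ hle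
  nlinarith [exp_pos (∫ x in s..t, b x)]

end Gronwall

section Constants

variable {d : ℕ} {q : ℝ}

theorem A2_nonneg : 0 ≤ A2 d := by unfold A2; positivity

theorem A2_pos (hd : d ≠ 0) : 0 < A2 d := by
  have : (0 : ℝ) < d := by positivity
  unfold A2; positivity

theorem A3_nonneg : 0 ≤ A3 d q := by unfold A3; positivity

theorem A3_pos (hd : d ≠ 0) (hq : q ≠ 0) : 0 < A3 d q := by
  have : (0 : ℝ) < d := by positivity
  unfold A3; positivity

end Constants

namespace StarSystem

variable (d : ℕ) (q : ℝ) (X Y Z W : ℝ → ℝ)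

noncomputable def rate (t : ℝ) : ℝ := d * X t ^ 2 + Z t ^ 2

/-- By the first integral, `defect = 𝓒𝓛²`. -/
noncomputable def defect (t : ℝ) : ℝ :=
  1 - (d * X t ^ 2 + A2 d * Y t ^ 2 + Z t ^ 2 - A3 d q * W t ^ 2)

/-- Has the sign of `W²/Y² - A₂/(A₃(d+2))`. -/
noncomputable def gap (t : ℝ) : ℝ := (d + 2) * A3 d q * W t ^ 2 - A2 d * Y t ^ 2

/-- `log (λW/(gY²))`, with `g` as in the first integral. -/
noncomputable def logRatio (t : ℝ) : ℝ := log (W t) - 2 * log (Y t) - ∫ τ in Iic t, X τ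

variable {d q X Y Z W} {s : Set ℝ} {t : ℝ}

theorem rate_nonneg : 0 ≤ rate d X Z t := by unfold rate; positivity

theorem rate_sub_one_eq :
    rate d X Z t - 1 = -defect d q X Y Z W t - A2 d * Y t ^ 2 + A3 d q * W t ^ 2 := by
  unfold rate defect; ring

theorem four_mul_le_of_gap_nonpos (hd : 2 ≤ d) (hgap : gap d q Y W t ≤ 0) :
    4 * (A3 d q * W t ^ 2) ≤ A2 d * Y t ^ 2 := by
  have hd' : (2 : ℝ) ≤ d := by exact_mod_cast hd
  have := mul_le_mul_of_nonneg_right (by linarith : (4 : ℝ) ≤ d + 2)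
    (mul_nonneg (A3_nonneg (d := d) (q := q)) (sq_nonneg (W t)))
  unfold gap at hgap
  linarith

theorem rate_sub_one_le (hd : 2 ≤ d) (hgap : gap d q Y W t ≤ 0) :
    rate d X Z t - 1 ≤ -defect d q X Y Z W t := by
  have := four_mul_le_of_gap_nonpos hd hgap
  have : 0 ≤ A3 d q * W t ^ 2 := mul_nonneg A3_nonneg (sq_nonneg _)
  rw [rate_sub_one_eq]; linarith

theorem defect_le_one (hd : 2 ≤ d) (hgap : gap d q Y W t ≤ 0) : defect d q X Y Z W t ≤ 1 := by
  have := rate_sub_one_le (X := X) (Z := Z) hd hgap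
  have := rate_nonneg (d := d) (X := X) (Z := Z) (t := t)
  linarith

theorem two_mul_A3_div_le (hd : 2 ≤ d) (hgap : gap d q Y W t ≤ 0) :
    2 * A3 d q / d * W t ^ 2 ≤ (d + 2) * Y t ^ 2 := by
  have h4 := four_mul_le_of_gap_nonpos hd hgap
  have hd' : (2 : ℝ) ≤ d := by exact_mod_cast hd
  rw [div_mul_eq_mul_div, div_le_iff₀ (by linarith)]
  have : 0 ≤ (d : ℝ) * (d + 2) * Y t ^ 2 := by positivity
  unfold A2 at h4
  linarith

theorem hasDerivAt_X (h : StarSystem d q X Y Z W s) (hd : d ≠ 0) (ht : t ∈ s) :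
    HasDerivAt X
      (X t * (rate d X Z t - 1) + (d + 2) * Y t ^ 2 - 2 * A3 d q / d * W t ^ 2) t := by
  refine (h t ht).1.congr_deriv ?_
  have : (d : ℝ) ≠ 0 := by exact_mod_cast hd
  unfold rate A2; field_simp

theorem hasDerivAt_Z (h : StarSystem d q X Y Z W s) (ht : t ∈ s) :
    HasDerivAt Z (Z t * (rate d X Z t - 1) + A3 d q * W t ^ 2) t :=
  (h t ht).2.2.1

theorem hasDerivAt_defect (h : StarSystem d q X Y Z W s) (hd : d ≠ 0) (ht : t ∈ s) :
    HasDerivAt (defect d q X Y Z W) (2 * rate d X Z t * defect d q X Y Z W t) t := by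
  obtain ⟨hX, hY, hZ, hW⟩ := h t ht
  refine ((((((hX.pow 2).const_mul (d : ℝ)).add ((hY.pow 2).const_mul (A2 d))).add
    (hZ.pow 2)).sub ((hW.pow 2).const_mul (A3 d q))).const_sub 1).congr_deriv ?_
  have : (d : ℝ) ≠ 0 := by exact_mod_cast hd
  unfold rate defect A2; field_simp; ring

theorem hasDerivAt_Z_sub_X (h : StarSystem d q X Y Z W s) (hd : d ≠ 0) (ht : t ∈ s) :
    HasDerivAt (fun t => Z t - X t)
      ((Z t - X t) * (rate d X Z t - 1) + gap d q Y W t / d) t := by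
  refine ((hasDerivAt_Z h ht).sub (hasDerivAt_X h hd ht)).congr_deriv ?_
  have : (d : ℝ) ≠ 0 := by exact_mod_cast hd
  unfold gap A2; field_simp; ring

theorem hasDerivAt_gap (h : StarSystem d q X Y Z W s) (ht : t ∈ s) :
    HasDerivAt (gap d q Y W)
      (2 * ((d + 2) * A3 d q * W t ^ 2) * (rate d X Z t - 2 * X t + Z t)
        - 2 * (A2 d * Y t ^ 2) * (rate d X Z t - X t)) t := by
  obtain ⟨-, hY, -, hW⟩ := h t ht
  refine (((hW.pow 2).const_mul ((d + 2) * A3 d q)).sub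
    ((hY.pow 2).const_mul (A2 d))).congr_deriv ?_
  unfold rate; ring

theorem hasDerivAt_logRatio (h : StarSystem d q X Y Z W s) (ht : t ∈ s) (hY : 0 < Y t)
    (hW : 0 < W t) (hI : HasDerivAt (fun t => ∫ τ in Iic t, X τ) (X t) t) :
    HasDerivAt (logRatio X Y W) (Z t - rate d X Z t - X t) t := by
  obtain ⟨-, hY', -, hW'⟩ := h t ht
  refine (((hW'.log hW.ne').sub ((hY'.log hY.ne').const_mul 2)).sub hI).congr_deriv ?_
  unfold rate; field_simp; ring

end StarSystem

open StarSystem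

/-- Hypotheses (i)–(iv) on a solution of (★) on `(-∞, tmax)`. -/
structure AdmissibleSolution (d : ℕ) (q tmax lam C : ℝ) (X Y Z W : ℝ → ℝ) : Prop where
  sys : StarSystem d q X Y Z W (Iio tmax)
  Y_pos : ∀ t < tmax, 0 < Y t
  W_pos : ∀ t < tmax, 0 < W t
  tendsto_X : Tendsto X atBot (𝓝 0)
  tendsto_Y : Tendsto Y atBot (𝓝 0)
  tendsto_Z : Tendsto Z atBot (𝓝 1)
  tendsto_W : Tendsto W atBot (𝓝 0)
  integrableOn_X : ∀ t < tmax, IntegrableOn X (Iic t)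
  firstIntegral : ∀ t < tmax, (d : ℝ) * X t ^ 2 + A2 d * Y t ^ 2 + Z t ^ 2 - A3 d q * W t ^ 2
    = 1 - C * (lam * exp (∫ τ in Iic t, X τ) * Y t) ^ 2
  tendsto_W_div_sq : Tendsto (fun t => W t / Y t ^ 2) atBot (𝓝 1)

namespace AdmissibleSolution

variable {d : ℕ} {q tmax lam C : ℝ} {X Y Z W : ℝ → ℝ} {t t₀ : ℝ}

theorem continuousOn_Z (h : AdmissibleSolution d q tmax lam C X Y Z W) :
    ContinuousOn Z (Iio tmax) := fun _ ht =>
  (hasDerivAt_Z h.sys ht).continuousAt.continuousWithinAt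

theorem continuousOn_rate_sub_one (h : AdmissibleSolution d q tmax lam C X Y Z W) :
    ContinuousOn (fun t => rate d X Z t - 1) (Iio tmax) := by
  have hX : ContinuousOn X (Iio tmax) := fun _ ht =>
    (h.sys _ ht).1.continuousAt.continuousWithinAt
  have hZ := h.continuousOn_Z
  unfold rate
  fun_prop

theorem hasDerivAt_integral_X (h : AdmissibleSolution d q tmax lam C X Y Z W) (ht : t < tmax) :
    HasDerivAt (fun t => ∫ τ in Iic t, X τ) (X t) t :=
  hasDerivAt_integral_Iic (h.integrableOn_X ((t + tmax) / 2) (by linarith)) (by linarith)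
    (h.sys t ht).1.continuousAt

theorem defect_eq (h : AdmissibleSolution d q tmax lam C X Y Z W) (ht : t < tmax) :
    defect d q X Y Z W t = C * lam ^ 2 * (exp (∫ τ in Iic t, X τ) * Y t) ^ 2 := by
  rw [defect, h.firstIntegral t ht]; ring

theorem defect_nonneg (h : AdmissibleSolution d q tmax lam C X Y Z W)
    (hCl : 100 * A2 d ≤ C * lam ^ 2) (ht : t < tmax) : 0 ≤ defect d q X Y Z W t := by
  rw [h.defect_eq ht]
  exact mul_nonneg (by linarith [A2_nonneg (d := d)]) (sq_nonneg _)

theorem tendsto_defect (h : AdmissibleSolution d q tmax lam C X Y Z W) :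
    Tendsto (defect d q X Y Z W) atBot (𝓝 0) := by
  rw [show (0 : ℝ) = 1 - ((d : ℝ) * 0 ^ 2 + A2 d * 0 ^ 2 + 1 ^ 2 - A3 d q * 0 ^ 2) by simp]
  exact ((((h.tendsto_X.pow 2).const_mul _).add ((h.tendsto_Y.pow 2).const_mul _)).add
    (h.tendsto_Z.pow 2)).sub ((h.tendsto_W.pow 2).const_mul _) |>.const_sub 1

theorem eventually_gap_neg (h : AdmissibleSolution d q tmax lam C X Y Z W) (hd : d ≠ 0) :
    ∀ᶠ t in atBot, gap d q Y W t < 0 := by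
  have hlim := (((h.tendsto_W_div_sq.pow 2).mul (h.tendsto_Y.pow 2)).const_mul
    ((d + 2) * A3 d q)).sub_const (A2 d)
  have hneg : ∀ᶠ t in atBot, (d + 2) * A3 d q * ((W t / Y t ^ 2) ^ 2 * Y t ^ 2) - A2 d < 0 :=
    hlim.eventually_lt_const (by simpa using A2_pos hd)
  filter_upwards [hneg, eventually_lt_atBot tmax] with t hneg ht
  have hY := h.Y_pos t ht
  have : gap d q Y W t =
      ((d + 2) * A3 d q * ((W t / Y t ^ 2) ^ 2 * Y t ^ 2) - A2 d) * Y t ^ 2 := by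
    unfold gap; field_simp
  rw [this]
  exact mul_neg_of_neg_of_pos hneg (by positivity)

theorem tendsto_logRatio (h : AdmissibleSolution d q tmax lam C X Y Z W) :
    Tendsto (logRatio X Y W) atBot (𝓝 0) := by
  have hlog := ((continuousAt_log one_ne_zero).tendsto.comp h.tendsto_W_div_sq).sub
    (tendsto_integral_Iic_zero (f := X) (μ := volume) tendsto_id)
  rw [log_one, sub_zero] at hlog
  refine hlog.congr' ?_
  filter_upwards [eventually_lt_atBot tmax] with t ht
  have hY := h.Y_pos t ht
  have hW := h.W_pos t ht
  simp only [Function.comp_apply, id, logRatio]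
  rw [log_div hW.ne' (by positivity), log_pow]
  push_cast; ring

theorem exists_gap_eq_zero (h : AdmissibleSolution d q tmax lam C X Y Z W) (hd : d ≠ 0)
    {t₂ : ℝ} (ht₂ : t₂ < tmax) (hgap : 0 ≤ gap d q Y W t₂) :
    ∃ t₀ ≤ t₂, gap d q Y W t₀ = 0 ∧ ∀ t ≤ t₀, gap d q Y W t ≤ 0 := by
  obtain ⟨T, hT⟩ := eventually_atBot.1 (h.eventually_gap_neg hd)
  have hTt : T < t₂ := lt_of_not_ge fun h => (hT t₂ h).not_ge hgap
  have hcont : ContinuousOn (gap d q Y W) (Icc T t₂) := fun t ht =>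
    (hasDerivAt_gap h.sys (ht.2.trans_lt ht₂ : t < tmax)).continuousAt.continuousWithinAt
  obtain ⟨t₀, ⟨-, ht₀⟩, hgap₀, hbefore⟩ := exists_first_hitting hTt.le hcont (hT T le_rfl) hgap
  refine ⟨t₀, ht₀, hgap₀, fun t ht => ?_⟩
  rcases le_or_gt t T with htT | hTt
  · exact (hT t htT).le
  rcases ht.lt_or_eq with hts | rfl
  · exact (hbefore t ⟨hTt.le, hts⟩).le
  · exact hgap₀.le

/-! ### Up to the first time `t₀` at which the gap vanishes -/

theorem X_nonneg (h : AdmissibleSolution d q tmax lam C X Y Z W) (hd : 2 ≤ d)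
    (hCl : 100 * A2 d ≤ C * lam ^ 2) (ht₀ : t₀ < tmax) (hgap : ∀ t ≤ t₀, gap d q Y W t ≤ 0) :
    ∀ t ≤ t₀, 0 ≤ X t := by
  have hsub : Iic t₀ ⊆ Iio tmax := Iic_subset_Iio.2 ht₀
  have := nonpos_of_hasDerivAt_le_mul_of_tendsto_atBot (ψ := fun t => -X t) isOpen_Iio
    h.continuousOn_rate_sub_one hsub
    (fun t ht => (rate_sub_one_le hd (hgap t ht)).trans
      (neg_nonpos.2 (h.defect_nonneg hCl (hsub ht))))
    (fun t ht => (hasDerivAt_X h.sys (by omega) (hsub ht)).neg)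
    (fun t ht => by have := two_mul_A3_div_le hd (hgap t ht); linarith)
    (by simpa using h.tendsto_X.neg)
  exact fun t ht => neg_nonpos.1 (this t ht)

theorem A2_mul_sq_le_defect (h : AdmissibleSolution d q tmax lam C X Y Z W)
    (hCl : 100 * A2 d ≤ C * lam ^ 2) (ht : t < tmax) (hX : ∀ τ ≤ t, 0 ≤ X τ) :
    100 * (A2 d * Y t ^ 2) ≤ defect d q X Y Z W t := by
  have hG : 1 ≤ exp (∫ τ in Iic t, X τ) ^ 2 :=
    one_le_pow₀ (one_le_exp (setIntegral_nonneg measurableSet_Iic fun τ hτ => hX τ hτ))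
  have hCl0 : 0 ≤ C * lam ^ 2 := by linarith [A2_nonneg (d := d)]
  rw [h.defect_eq ht, mul_pow]
  calc 100 * (A2 d * Y t ^ 2) = 100 * A2 d * Y t ^ 2 := by ring
    _ ≤ C * lam ^ 2 * Y t ^ 2 := by gcongr
    _ ≤ C * lam ^ 2 * (exp (∫ τ in Iic t, X τ) ^ 2 * Y t ^ 2) := by
        gcongr; exact le_mul_of_one_le_left (sq_nonneg _) hG

theorem X_le_defect (h : AdmissibleSolution d q tmax lam C X Y Z W) (hd : 2 ≤ d)
    (hCl : 100 * A2 d ≤ C * lam ^ 2) (ht₀ : t₀ < tmax) (hgap : ∀ t ≤ t₀, gap d q Y W t ≤ 0) :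
    ∀ t ≤ t₀, X t ≤ defect d q X Y Z W t / (100 * d) := by
  have hsub : Iic t₀ ⊆ Iio tmax := Iic_subset_Iio.2 ht₀
  have hX := h.X_nonneg hd hCl ht₀ hgap
  have := nonpos_of_hasDerivAt_le_mul_of_tendsto_atBot
    (ψ := fun t => X t - defect d q X Y Z W t / (100 * d)) isOpen_Iio
    h.continuousOn_rate_sub_one hsub
    (fun t ht => (rate_sub_one_le hd (hgap t ht)).trans
      (neg_nonpos.2 (h.defect_nonneg hCl (hsub ht))))
    (fun t ht => (hasDerivAt_X h.sys (by omega) (hsub ht)).sub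
      ((hasDerivAt_defect h.sys (by omega) (hsub ht)).div_const _))
    (fun t ht => by
      have hY := h.A2_mul_sq_le_defect hCl (hsub ht) fun τ hτ => hX τ (hτ.trans ht)
      have hrP : 0 ≤ rate d X Z t * defect d q X Y Z W t :=
        mul_nonneg rate_nonneg (h.defect_nonneg hCl (hsub ht))
      have hW : 0 ≤ A3 d q * W t ^ 2 := mul_nonneg A3_nonneg (sq_nonneg _)
      have hYd : (d + 2) * Y t ^ 2 = A2 d * Y t ^ 2 / d := by unfold A2; field_simp
      rw [hYd]
      field_simp
      linarith)
    (by simpa using h.tendsto_X.sub (h.tendsto_defect.div_const _))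
  exact fun t ht => sub_nonpos.1 (this t ht)

theorem Z_sub_X_nonneg (h : AdmissibleSolution d q tmax lam C X Y Z W) (hd : d ≠ 0)
    (ht₀ : t₀ < tmax) (hgap : ∀ t ≤ t₀, gap d q Y W t ≤ 0) (hgap₀ : gap d q Y W t₀ = 0) :
    ∀ t ≤ t₀, 0 ≤ Z t - X t := by
  have hsub : Iic t₀ ⊆ Iio tmax := Iic_subset_Iio.2 ht₀
  have hf₀ : 0 ≤ Z t₀ - X t₀ := by
    have hgap' := (hasDerivAt_gap h.sys ht₀).nonneg_of_isMaxOn_Iic fun t ht => by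
      simpa [hgap₀] using hgap t ht
    have hW : (d + 2) * A3 d q * W t₀ ^ 2 = A2 d * Y t₀ ^ 2 := by
      unfold gap at hgap₀; linarith
    have hY : 0 < 2 * (A2 d * Y t₀ ^ 2) := by
      have := h.Y_pos t₀ ht₀; have := A2_pos hd; positivity
    rw [hW, ← mul_sub, show rate d X Z t₀ - 2 * X t₀ + Z t₀ - (rate d X Z t₀ - X t₀)
      = Z t₀ - X t₀ by ring] at hgap'
    exact (mul_nonneg_iff_of_pos_left hY).1 hgap'
  intro t ht
  exact nonneg_of_hasDerivAt_le_mul_of_nonneg (ψ := fun t => Z t - X t) isOpen_Iio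
    h.continuousOn_rate_sub_one ht (Icc_subset_Iic_self.trans hsub)
    (fun x hx => hasDerivAt_Z_sub_X h.sys hd (hsub hx.2))
    (fun x hx => by
      have := div_nonpos_of_nonpos_of_nonneg (hgap x hx.2) (Nat.cast_nonneg d)
      linarith) hf₀

theorem logRatio_add_Z_le (h : AdmissibleSolution d q tmax lam C X Y Z W) (hd : 2 ≤ d)
    (hCl : 100 * A2 d ≤ C * lam ^ 2) (ht₀ : t₀ < tmax) (hgap : ∀ t ≤ t₀, gap d q Y W t ≤ 0)
    {s : ℝ} (hs : s ≤ t₀) (hZ : ∀ t ≤ s, 1 / 2 ≤ Z t) :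
    logRatio X Y W s + 21 / 10 * Z s ≤ 21 / 10 := by
  have hsub : Iic s ⊆ Iio tmax := Iic_subset_Iio.2 (hs.trans_lt ht₀)
  have hX := h.X_nonneg hd hCl ht₀ hgap
  have hanti : AntitoneOn (fun t => logRatio X Y W t + 21 / 10 * Z t) (Iic s) :=
    antitoneOn_of_hasDerivAt_nonpos (convex_Iic s)
      (fun t ht => (hasDerivAt_logRatio h.sys (hsub ht) (h.Y_pos t (hsub ht))
        (h.W_pos t (hsub ht)) (h.hasDerivAt_integral_X (hsub ht))).add
        ((hasDerivAt_Z h.sys (hsub ht)).const_mul _))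
      fun t ht => by
        have hts : t ≤ t₀ := (mem_Iic.1 ht).trans hs
        have hr := rate_sub_one_le (X := X) (Z := Z) hd (hgap t hts)
        have hr_eq := rate_sub_one_eq (d := d) (q := q) (X := X) (Y := Y) (Z := Z) (W := W) (t := t)
        have hP := h.defect_nonneg hCl (hsub ht)
        have hY := h.A2_mul_sq_le_defect hCl (hsub ht) fun τ hτ => hX τ (hτ.trans hts)
        have hW := four_mul_le_of_gap_nonpos hd (hgap t hts)
        have hZ1 : Z t ≤ 1 := by
          have : 0 ≤ (d : ℝ) * X t ^ 2 := by positivity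
          unfold rate at hr; nlinarith [sq_nonneg (Z t - 1)]
        have hZr : Z t * (rate d X Z t - 1) ≤ 1 / 2 * (rate d X Z t - 1) :=
          mul_le_mul_of_nonpos_right (hZ t ht) (by linarith)
        linarith [hX t hts]
  have hlim := h.tendsto_logRatio.add (h.tendsto_Z.const_mul (21 / 10))
  rw [zero_add, mul_one] at hlim
  exact ge_of_tendsto hlim (eventually_atBot.2 ⟨s, fun t ht => hanti ht self_mem_Iic ht⟩)

theorem seven_tenths_le_defect (h : AdmissibleSolution d q tmax lam C X Y Z W) (hd : 2 ≤ d)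
    (hCl : 100 * A2 d ≤ C * lam ^ 2) (ht₀ : t₀ < tmax) (hgap : ∀ t ≤ t₀, gap d q Y W t ≤ 0)
    {s : ℝ} (hs : s ≤ t₀) (hZs : Z s = 1 / 2) : 7 / 10 ≤ defect d q X Y Z W s := by
  have hst : s < tmax := hs.trans_lt ht₀
  have hd' : (2 : ℝ) ≤ d := by exact_mod_cast hd
  have hX := h.X_nonneg hd hCl ht₀ hgap
  have hXP := h.X_le_defect hd hCl ht₀ hgap s hs
  have hP := h.defect_nonneg hCl hst
  have hP1 := defect_le_one (X := X) (Z := Z) hd (hgap s hs)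
  have hY := h.A2_mul_sq_le_defect hCl hst fun τ hτ => hX τ (hτ.trans hs)
  have hdX : (d : ℝ) * X s ^ 2 ≤ 1 / 10000 := by
    rw [le_div_iff₀ (by positivity)] at hXP
    nlinarith [hX s hs]
  have : defect d q X Y Z W s = 3 / 4 - d * X s ^ 2 - A2 d * Y s ^ 2 + A3 d q * W s ^ 2 := by
    unfold defect; rw [hZs]; ring
  nlinarith [mul_nonneg (A3_nonneg (d := d) (q := q)) (sq_nonneg (W s))]

theorem logRatio_le_of_Z_eq_half (h : AdmissibleSolution d q tmax lam C X Y Z W) (hd : 2 ≤ d)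
    (hCl : 100 * A2 d ≤ C * lam ^ 2) (ht₀ : t₀ < tmax) (hgap : ∀ t ≤ t₀, gap d q Y W t ≤ 0)
    (hgap₀ : gap d q Y W t₀ = 0) {s : ℝ} (hs : s ≤ t₀) (hZs : Z s = 1 / 2) :
    logRatio X Y W t₀ ≤ logRatio X Y W s + 5 / 7 := by
  have hsub : Iic t₀ ⊆ Iio tmax := Iic_subset_Iio.2 ht₀
  have hd0 : d ≠ 0 := by omega
  have hf := h.Z_sub_X_nonneg hd0 ht₀ hgap hgap₀
  have hmono : MonotoneOn (defect d q X Y Z W) (Iic t₀) :=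
    monotoneOn_of_hasDerivAt_nonneg (convex_Iic t₀)
      (fun t ht => hasDerivAt_defect h.sys hd0 (hsub ht)) fun t ht => by
        have := h.defect_nonneg hCl (hsub ht)
        have := rate_nonneg (d := d) (X := X) (Z := Z) (t := t)
        positivity
  have hP := h.seven_tenths_le_defect hd hCl ht₀ hgap hs hZs
  have hanti : AntitoneOn (fun t => logRatio X Y W t + 10 / 7 * (Z t - X t)) (Icc s t₀) :=
    antitoneOn_of_hasDerivAt_nonpos (convex_Icc s t₀)
      (fun t ht => (hasDerivAt_logRatio h.sys (hsub ht.2) (h.Y_pos t (hsub ht.2))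
        (h.W_pos t (hsub ht.2)) (h.hasDerivAt_integral_X (hsub ht.2))).add
        ((hasDerivAt_Z_sub_X h.sys hd0 (hsub ht.2)).const_mul _))
      fun t ht => by
        have hPt := hP.trans (hmono hs ht.2 ht.1)
        have hr := rate_sub_one_le (X := X) (Z := Z) hd (hgap t ht.2)
        have hr₀ := rate_nonneg (d := d) (X := X) (Z := Z) (t := t)
        have hg := div_nonpos_of_nonpos_of_nonneg (hgap t ht.2) (Nat.cast_nonneg d)
        have h1 := mul_le_mul_of_nonneg_left hr (hf t ht.2)
        have h2 := mul_le_mul_of_nonneg_left hPt (hf t ht.2)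
        linarith
  have := hanti (left_mem_Icc.2 hs) (right_mem_Icc.2 hs) hs
  simp only at this
  linarith [hf t₀ le_rfl, h.X_nonneg hd hCl ht₀ hgap s hs]

theorem logRatio_le_two (h : AdmissibleSolution d q tmax lam C X Y Z W) (hd : 2 ≤ d)
    (hCl : 100 * A2 d ≤ C * lam ^ 2) (ht₀ : t₀ < tmax) (hgap : ∀ t ≤ t₀, gap d q Y W t ≤ 0)
    (hgap₀ : gap d q Y W t₀ = 0) : logRatio X Y W t₀ ≤ 2 := by
  by_cases hZ : ∀ t ≤ t₀, 1 / 2 ≤ Z t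
  · linarith [h.logRatio_add_Z_le hd hCl ht₀ hgap le_rfl hZ, hZ t₀ le_rfl]
  push Not at hZ
  obtain ⟨x, hx, hZx⟩ := hZ
  obtain ⟨T, hT⟩ := eventually_atBot.1
    (h.tendsto_Z.eventually (lt_mem_nhds (by norm_num : (1 : ℝ) / 2 < 1)))
  have hTx : T < x := lt_of_not_ge fun hxT => (hT x hxT).not_gt hZx
  obtain ⟨s, ⟨-, hsx⟩, hZs, hbefore⟩ :=
    exists_first_hitting (g := fun t => -Z t) (c := -(1 / 2)) hTx.le
      (h.continuousOn_Z.mono fun y hy => (hy.2.trans hx).trans_lt ht₀).neg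
      (by linarith [hT T le_rfl]) (by linarith)
  have hZs' : Z s = 1 / 2 := by linarith [hZs]
  have hZ : ∀ t ≤ s, 1 / 2 ≤ Z t := fun t ht => by
    rcases le_or_gt t T with htT | hTt
    · exact (hT t htT).le
    rcases ht.lt_or_eq with hts | rfl
    · linarith [hbefore t ⟨hTt.le, hts⟩]
    · exact hZs'.ge
  have hs : s ≤ t₀ := hsx.trans hx
  linarith [h.logRatio_add_Z_le hd hCl ht₀ hgap hs hZ,
    h.logRatio_le_of_Z_eq_half hd hCl ht₀ hgap hgap₀ hs hZs']

theorem log_le_two_mul_logRatio (h : AdmissibleSolution d q tmax lam C X Y Z W) (hd : 2 ≤ d)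
    (hq : q ≠ 0) (hCl : 100 * A2 d ≤ C * lam ^ 2) (ht₀ : t₀ < tmax)
    (hgap : ∀ t ≤ t₀, gap d q Y W t ≤ 0) (hgap₀ : gap d q Y W t₀ = 0) :
    log (A2 d / (A3 d q * (d + 2)) * (C * lam ^ 2)) ≤ 2 * logRatio X Y W t₀ := by
  set G := ∫ τ in Iic t₀, X τ
  have hy := h.Y_pos t₀ ht₀
  have hw := h.W_pos t₀ ht₀
  have hA2 := A2_pos (d := d) (by omega)
  have hA3 := A3_pos (d := d) (by omega) hq
  have hCl0 : 0 < C * lam ^ 2 := by linarith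
  have hL : exp (2 * logRatio X Y W t₀) = (W t₀ / (exp G * Y t₀ ^ 2)) ^ 2 := by
    rw [two_mul, exp_add, logRatio, exp_sub, exp_sub, exp_log hw, two_mul, exp_add, exp_log hy]
    ring
  have hP : C * lam ^ 2 * (exp G * Y t₀) ^ 2 ≤ 1 :=
    h.defect_eq ht₀ ▸ defect_le_one hd (hgap t₀ le_rfl)
  have hW : W t₀ ^ 2 = A2 d / (A3 d q * (d + 2)) * Y t₀ ^ 2 := by
    field_simp; unfold gap at hgap₀; linarith
  rw [log_le_iff_le_exp (by positivity), hL, div_pow, hW, le_div_iff₀ (by positivity)]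
  calc A2 d / (A3 d q * (d + 2)) * (C * lam ^ 2) * (exp G * Y t₀ ^ 2) ^ 2
      = A2 d / (A3 d q * (d + 2)) * Y t₀ ^ 2 * (C * lam ^ 2 * (exp G * Y t₀) ^ 2) := by ring
    _ ≤ A2 d / (A3 d q * (d + 2)) * Y t₀ ^ 2 * 1 := by gcongr
    _ = _ := by ring

theorem sq_div_sq_le (h : AdmissibleSolution d q tmax lam C X Y Z W) (hd : 2 ≤ d) (hq : q ≠ 0)
    (hCl : 100 * A2 d ≤ C * lam ^ 2) (hCl' : exp 5 * (A3 d q * (d + 2)) / A2 d ≤ C * lam ^ 2) :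
    ∀ t < tmax, W t ^ 2 / Y t ^ 2 ≤ A2 d / (A3 d q * (d + 2)) := by
  intro t ht
  by_contra! hlt
  have hA2 := A2_pos (d := d) (by omega)
  have hA3 := A3_pos (d := d) (by omega) hq
  have hgap : 0 ≤ gap d q Y W t := by
    have := h.Y_pos t ht
    rw [div_lt_div_iff₀ (by positivity) (by positivity)] at hlt
    unfold gap; linarith
  obtain ⟨t₀, ht₀, hgap₀, hgap⟩ := h.exists_gap_eq_zero (by omega) ht hgap
  have hupper := h.logRatio_le_two hd hCl (ht₀.trans_lt ht) hgap hgap₀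
  have hlower := h.log_le_two_mul_logRatio hd hq hCl (ht₀.trans_lt ht) hgap hgap₀
  have : 5 ≤ log (A2 d / (A3 d q * (d + 2)) * (C * lam ^ 2)) := by
    have : 0 < C * lam ^ 2 := by linarith
    rw [le_log_iff_exp_le (by positivity)]
    calc exp 5 = A2 d / (A3 d q * (d + 2)) * (exp 5 * (A3 d q * (d + 2)) / A2 d) := by
          field_simp
      _ ≤ A2 d / (A3 d q * (d + 2)) * (C * lam ^ 2) := by gcongr
  linarith

end AdmissibleSolution

/-- For all `d ≥ 2` and `q ≠ 0` there is `Λ₀ = Λ₀(q,d) > 0` such that any solution of (★)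
on `(−∞, t_max)` with `Y, W > 0`, limit `(0,0,1,0)` at `−∞`, first integral constant
`𝓒 > 0` (with `𝓛 = g·Y`, `g(t) = λ·exp(∫_{−∞}^t X)`, `λ > 0`), `W/Y² → 1` at `−∞` and
`𝓒λ² ≥ Λ₀` satisfies `W²/Y² ≤ A₂/(A₃(d+2))` on `(−∞, t_max)`. -/
theorem stmt16 (d : ℕ) (hd : 2 ≤ d) (q : ℝ) (hq : q ≠ 0) :
    ∃ Λ0 > (0:ℝ), ∀ (tmax : ℝ) (X Y Z W : ℝ → ℝ),
      StarSystem d q X Y Z W (Set.Iio tmax) →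
      (∀ t < tmax, 0 < Y t) → (∀ t < tmax, 0 < W t) →
      Tendsto X atBot (𝓝 0) → Tendsto Y atBot (𝓝 0) →
      Tendsto Z atBot (𝓝 1) → Tendsto W atBot (𝓝 0) →
      ∀ (lam C : ℝ), 0 < lam → 0 < C →
      (∀ t < tmax, IntegrableOn X (Set.Iic t)) →
      (∀ t < tmax,
        (d : ℝ) * X t^2 + A2 d * Y t^2 + Z t^2 - A3 d q * W t^2
          = 1 - C * (lam * Real.exp (∫ τ in Set.Iic t, X τ) * Y t)^2) →
      Tendsto (fun t => W t / Y t^2) atBot (𝓝 1) →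
      Λ0 ≤ C * lam^2 →
      ∀ t < tmax, W t^2 / Y t^2 ≤ A2 d / (A3 d q * ((d : ℝ) + 2)) := by
  refine ⟨max (100 * A2 d) (exp 5 * (A3 d q * (d + 2)) / A2 d),
    lt_max_of_lt_left (by linarith [A2_pos (d := d) (by omega)]), ?_⟩
  intro tmax X Y Z W hsys hY hW hX hYlim hZ hWlim lam C _ _ hint hfirst hWY hΛ
  have h : AdmissibleSolution d q tmax lam C X Y Z W :=
    ⟨hsys, hY, hW, hX, hYlim, hZ, hWlim, hint, hfirst, hWY⟩
  exact h.sq_div_sq_le hd hq (le_of_max_le_left hΛ) (le_of_max_le_right hΛ)
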